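/- Let m be a nonzero integer such that |m| is prime. Base change of coefficients along the inclusion ℤ → ℤ[1/m] induces a bijection from the set of SL₂(ℤ)-equivalence classes of binary quadratic forms over ℤ of discriminant 1 − 4m onto the set of SL₂(ℤ[1/m])-equivalence classes of binary quadratic forms over ℤ[1/m] of discriminant 1 − 4m. -/

import Mathlib

/-- A binary quadratic form `a x² + b x y + c y²` over a commutative ring. -/
structure BQF (R : Type*) [CommRing R] where
  a : R
  b : R
  c : R

namespace BQF

variable {R S : Type*} [CommRing R] [CommRing S]

/-- The discriminant `b² - 4ac`. -/
def disc (Q : BQF R) : R := Q.b ^ 2 - 4 * Q.a * Q.c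

/-- The action of `g ∈ SL₂(R)` on forms, `(g · Q)(v) = Q(g · v)`:
the coefficients are obtained by expanding `Q (g₀₀ x + g₀₁ y, g₁₀ x + g₁₁ y)`. -/
def act (g : Matrix.SpecialLinearGroup (Fin 2) R) (Q : BQF R) : BQF R where
  a := Q.a * g.1 0 0 ^ 2 + Q.b * g.1 0 0 * g.1 1 0 + Q.c * g.1 1 0 ^ 2
  b := 2 * Q.a * g.1 0 0 * g.1 0 1 + Q.b * (g.1 0 0 * g.1 1 1 + g.1 0 1 * g.1 1 0)
        + 2 * Q.c * g.1 1 0 * g.1 1 1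
  c := Q.a * g.1 0 1 ^ 2 + Q.b * g.1 0 1 * g.1 1 1 + Q.c * g.1 1 1 ^ 2

/-- Two forms are `SL₂(R)`-equivalent if they are in the same orbit. -/
def Equiv (Q₁ Q₂ : BQF R) : Prop := ∃ g, act g Q₁ = Q₂

/-- Base change of a binary quadratic form along a ring homomorphism. -/
def map (f : R →+* S) (Q : BQF R) : BQF S := ⟨f Q.a, f Q.b, f Q.c⟩

theorem disc_map (f : R →+* S) (Q : BQF R) : (Q.map f).disc = f Q.disc := by
  simp [disc, map, map_sub, map_mul, map_pow, map_ofNat]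

end BQF

/-- The number of `SL₂(R)`-equivalence classes of binary quadratic forms over `R`
of discriminant `D`. -/
noncomputable def classCount (R : Type*) [CommRing R] (D : R) : ℕ :=
  Nat.card (Quot (fun Q₁ Q₂ : {Q : BQF R // Q.disc = D} => BQF.Equiv Q₁.1 Q₂.1))

/-!
Injectivity. Clearing denominators and running the Euclidean algorithm on a `2 × 2` integer
matrix writes every `g ∈ SL₂(ℤ[1/m])` as `γ₁ · diag(δ, δ⁻¹) · γ₂` with `γᵢ ∈ SL₂(ℤ)`, and the
unit `δ` is `±mʲ`. So two integral forms that are equivalent over `ℤ[1/m]` are, up to `SL₂(ℤ)`,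
related by `(a, b, c) ↦ (m²ʲ a, b, m⁻²ʲ c)`. Because `D = 1 - 4m = (1 - 2m)² - 4m²`, an
integral form `(m² A, b, c)` of discriminant `D` has `b ≡ ±(1 - 2m) mod 2m²` (the prime `m`
divides exactly one of the coprime factors `(b ∓ (1 - 2m)) / 2`), and then an explicit matrix of
`SL₂(ℤ)` takes it to `(A, b, m² c)`.

Surjectivity. Given a form over `ℤ[1/m]` with `a ≠ 0`, a diagonal unit scales `a` to `A mᵉ` with
`m ∤ A` and `e ≤ 1`; a shear then makes `b` an integer `β ≡ 1 mod m²` (a Chinese remainder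
choice); finally `4ac = β² - D` forces `c` to be integral, since `c ∈ ℤ[1/m]` and
`v_m(4a) ≤ v_m(4m) ≤ v_m(β² - D)`.
-/

open scoped MatrixGroups

namespace Matrix.SpecialLinearGroup

variable {R : Type*} [CommRing R]

def diagUnit : Rˣ →* SL(2, R) where
  toFun δ := ⟨!![↑δ, 0; 0, ↑δ⁻¹], by simp [Matrix.det_fin_two_of]⟩
  map_one' := Subtype.ext <| by simp [Matrix.one_fin_two]
  map_mul' δ ε := Subtype.ext <| by
    show !![(↑(δ * ε) : R), 0; 0, ↑(δ * ε)⁻¹] = !![(δ : R), 0; 0, ↑δ⁻¹] * !![(ε : R), 0; 0, ↑ε⁻¹]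
    simp [mul_comm]

@[simp]
lemma coe_diagUnit (δ : Rˣ) : (diagUnit δ : Matrix (Fin 2) (Fin 2) R) = !![↑δ, 0; 0, ↑δ⁻¹] :=
  rfl

def shear (t : R) : SL(2, R) := ⟨!![1, t; 0, 1], by simp [Matrix.det_fin_two_of]⟩

@[simp]
lemma coe_shear (t : R) : (shear t : Matrix (Fin 2) (Fin 2) R) = !![1, t; 0, 1] := rfl

end Matrix.SpecialLinearGroup

open Matrix.SpecialLinearGroup (diagUnit shear)

namespace BQF

variable {R S : Type*} [CommRing R] [CommRing S]

@[ext]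
lemma ext {Q₁ Q₂ : BQF R} (ha : Q₁.a = Q₂.a) (hb : Q₁.b = Q₂.b) (hc : Q₁.c = Q₂.c) :
    Q₁ = Q₂ := by
  cases Q₁; cases Q₂; congr

lemma act_one (Q : BQF R) : act 1 Q = Q := by
  ext <;> simp [act]

lemma act_mul (g h : SL(2, R)) (Q : BQF R) : act (g * h) Q = act h (act g Q) := by
  refine ext ?_ ?_ ?_ <;>
    simp only [act, Matrix.SpecialLinearGroup.coe_mul, Matrix.mul_apply, Fin.sum_univ_two] <;> ring

lemma act_inv_act (g : SL(2, R)) (Q : BQF R) : act g⁻¹ (act g Q) = Q := by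
  rw [← act_mul, mul_inv_cancel, act_one]

lemma disc_act (g : SL(2, R)) (Q : BQF R) : (act g Q).disc = Q.disc := by
  have hg : g.1 0 0 * g.1 1 1 - g.1 0 1 * g.1 1 0 = 1 := by
    rw [← Matrix.det_fin_two]; exact g.2
  simp only [disc, act]
  linear_combination (g.1 0 0 * g.1 1 1 - g.1 0 1 * g.1 1 0 + 1) * (Q.b ^ 2 - 4 * Q.a * Q.c) * hg

lemma map_act (f : R →+* S) (g : SL(2, R)) (Q : BQF R) :
    map f (act g Q) = act (Matrix.SpecialLinearGroup.map f g) (map f Q) := by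
  ext <;> simp [act, map, map_ofNat]

lemma Equiv.refl (Q : BQF R) : Equiv Q Q := ⟨1, act_one Q⟩

lemma Equiv.symm {Q₁ Q₂ : BQF R} : Equiv Q₁ Q₂ → Equiv Q₂ Q₁
  | ⟨g, hg⟩ => ⟨g⁻¹, hg ▸ act_inv_act g Q₁⟩

lemma Equiv.trans {Q₁ Q₂ Q₃ : BQF R} : Equiv Q₁ Q₂ → Equiv Q₂ Q₃ → Equiv Q₁ Q₃
  | ⟨g, hg⟩, ⟨h, hh⟩ => ⟨g * h, by rw [act_mul, hg, hh]⟩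

lemma equivalence_equiv : Equivalence (Equiv (R := R)) :=
  ⟨Equiv.refl, Equiv.symm, Equiv.trans⟩

lemma Equiv.disc_eq {Q₁ Q₂ : BQF R} : Equiv Q₁ Q₂ → Q₂.disc = Q₁.disc
  | ⟨g, hg⟩ => hg ▸ disc_act g Q₁

lemma Equiv.map (f : R →+* S) {Q₁ Q₂ : BQF R} : Equiv Q₁ Q₂ → Equiv (Q₁.map f) (Q₂.map f)
  | ⟨g, hg⟩ => ⟨Matrix.SpecialLinearGroup.map f g, by rw [← map_act, hg]⟩

lemma act_diagUnit (δ : Rˣ) (Q : BQF R) :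
    act (diagUnit δ) Q = ⟨Q.a * δ ^ 2, Q.b, Q.c * ↑δ⁻¹ ^ 2⟩ := by
  ext <;> simp [act]

lemma act_shear (t : R) (Q : BQF R) :
    act (shear t) Q = ⟨Q.a, 2 * Q.a * t + Q.b, Q.a * t ^ 2 + Q.b * t + Q.c⟩ := by
  ext <;> simp [act]

lemma exists_equiv_a_ne_zero (Q : BQF R) (hQ : Q.disc ≠ 0) : ∃ Q', Equiv Q Q' ∧ Q'.a ≠ 0 := by
  by_cases ha : Q.a = 0
  · by_cases hc : Q.c = 0
    · refine ⟨act ⟨!![1, 0; 1, 1], by simp [Matrix.det_fin_two_of]⟩ Q, ⟨_, rfl⟩, ?_⟩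
      have hb : Q.b ≠ 0 := by rintro hb; simp [disc, ha, hb, hc] at hQ
      simpa [act, ha, hc] using hb
    · exact ⟨act ⟨!![0, -1; 1, 0], by simp [Matrix.det_fin_two_of]⟩ Q, ⟨_, rfl⟩, by simpa [act]⟩
  · exact ⟨Q, Equiv.refl Q, ha⟩

lemma equiv_of_mul_eq {t s A β c : R} (h : A * c = 1 + s * β + t * β ^ 2) :
    Equiv ⟨t * A, s + 2 * t * β, c⟩ ⟨A, s + 2 * t * β, t * c⟩ := by
  refine ⟨⟨!![-β, -c; A, s + t * β], by simp [Matrix.det_fin_two_of]; linear_combination h⟩, ?_⟩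
  ext <;> simp [act]
  · linear_combination A * h
  · linear_combination (s + 2 * t * β) * h
  · linear_combination t * c * h

end BQF

lemma Prime.sq_dvd_or_sq_dvd_of_mul_eq {p x y N : ℤ} (hp : Prime p) (h : x * y = p ^ 2 * N)
    (hxy : ¬ p ∣ y - x) : p ^ 2 ∣ x ∨ p ^ 2 ∣ y := by
  have hdvd : p ^ 2 ∣ x * y := ⟨N, h⟩
  rcases hp.dvd_mul.mp (dvd_trans (dvd_pow_self p two_ne_zero) hdvd) with hx | hy
  · have hy : ¬ p ∣ y := fun hy => hxy (dvd_sub hy hx)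
    exact .inl (((hp.coprime_iff_not_dvd.mpr hy).pow_left).dvd_of_dvd_mul_right hdvd)
  · have hx : ¬ p ∣ x := fun hx => hxy (dvd_sub hy hx)
    exact .inr (((hp.coprime_iff_not_dvd.mpr hx).pow_left).dvd_of_dvd_mul_left hdvd)

lemma Prime.exists_dvd_mul_pow_sub_and_sq_dvd_sub_one {m q : ℤ} (hm : Prime m) (hq : ¬ m ∣ q)
    (t : ℕ) (B : ℤ) : ∃ β : ℤ, q ∣ β * m ^ t - B ∧ m ^ 2 ∣ β - 1 := by
  obtain ⟨u, v, huv⟩ := (hm.coprime_iff_not_dvd.mpr hq).pow_left (m := t + 2)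
  exact ⟨1 + m ^ 2 * (u * (B - m ^ t)), ⟨-v * (B - m ^ t), by linear_combination (B - m ^ t) * huv⟩,
    ⟨u * (B - m ^ t), by ring⟩⟩

lemma Prime.exists_not_dvd_and_four_mul_dvd {m β : ℤ} (hm : Prime m) (hβ : m ^ 2 ∣ β - 1) :
    ∃ V : ℤ, ¬ m ∣ V ∧ 4 * m ∣ (β ^ 2 - (1 - 4 * m)) * V := by
  obtain ⟨k, hk⟩ := hβ
  obtain rfl : β = m ^ 2 * k + 1 := by linear_combination hk
  by_cases h2 : m ∣ 2
  · obtain ⟨s, hs⟩ := h2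
    have habs : m.natAbs = 2 :=
      (Nat.prime_dvd_prime_iff_eq (Int.prime_iff_natAbs_prime.mp hm) Nat.prime_two).mp
        (Int.natAbs_dvd_natAbs.mpr ⟨s, hs⟩)
    have h4 : m ^ 2 = 4 := by rw [← Int.natAbs_sq, habs]; norm_num
    exact ⟨1, hm.not_dvd_one, ⟨m * k ^ 2 + s * k + 1, by
      linear_combination (k ^ 2 * m ^ 2 + 2 * k) * h4 + 4 * k * hs⟩⟩
  · have h4 : ¬ m ∣ 4 := fun h => h2 (hm.dvd_of_dvd_pow (n := 2) (by norm_num [h]))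
    exact ⟨4, h4, ⟨m * k * (m ^ 2 * k + 2) + 4, by ring⟩⟩

namespace BQF

variable {m : ℤ}

lemma exists_eq_add_of_disc_eq (hm : Prime m) {A b c : ℤ}
    (h : b ^ 2 - 4 * (m ^ 2 * A) * c = 1 - 4 * m) :
    ∃ s β : ℤ, s ^ 2 = (1 - 2 * m) ^ 2 ∧ b = s + 2 * m ^ 2 * β := by
  obtain ⟨k, rfl⟩ : Odd b :=
    (Int.odd_pow' two_ne_zero).mp ⟨2 * m ^ 2 * A * c - 2 * m, by linear_combination h⟩
  have hprod : (k + m) * (k + 1 - m) = m ^ 2 * (A * c - 1) :=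
    mul_left_cancel₀ four_ne_zero (by linear_combination h)
  have hcop : ¬ m ∣ (k + 1 - m) - (k + m) := fun hdvd => hm.not_dvd_one <|
    (by ring : (k + 1 - m) - (k + m) + m * 2 = 1) ▸ dvd_add hdvd (dvd_mul_right m 2)
  rcases hm.sq_dvd_or_sq_dvd_of_mul_eq hprod hcop with ⟨β, hβ⟩ | ⟨β, hβ⟩
  · exact ⟨1 - 2 * m, β, rfl, by linear_combination 2 * hβ⟩
  · exact ⟨-(1 - 2 * m), β, by ring, by linear_combination 2 * hβ⟩

lemma equiv_mul_sq_of_disc_eq (hm : Prime m) {A b c : ℤ}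
    (h : (⟨m ^ 2 * A, b, c⟩ : BQF ℤ).disc = 1 - 4 * m) :
    Equiv ⟨m ^ 2 * A, b, c⟩ ⟨A, b, m ^ 2 * c⟩ := by
  obtain ⟨s, β, hs, rfl⟩ := exists_eq_add_of_disc_eq hm h
  refine equiv_of_mul_eq (mul_left_cancel₀ (mul_ne_zero four_ne_zero (pow_ne_zero 2 hm.ne_zero)) ?_)
  unfold disc at h
  linear_combination hs - h

lemma equiv_mul_pow_of_disc_eq (hm : Prime m) (n : ℕ) {A b c : ℤ}
    (h : (⟨m ^ (2 * n) * A, b, c⟩ : BQF ℤ).disc = 1 - 4 * m) :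
    Equiv ⟨m ^ (2 * n) * A, b, c⟩ ⟨A, b, m ^ (2 * n) * c⟩ := by
  induction n generalizing A c with
  | zero => simpa using Equiv.refl _
  | succ n ih =>
    have hpow : m ^ (2 * (n + 1)) = m ^ 2 * m ^ (2 * n) := by ring
    rw [hpow, mul_assoc] at h ⊢
    refine (equiv_mul_sq_of_disc_eq hm h).trans ?_
    rw [mul_assoc, mul_left_comm]
    exact ih (by unfold disc at h ⊢; linear_combination h)

end BQF

namespace Int

lemma exists_SL2_mul_eq_gcd (M : Matrix (Fin 2) (Fin 2) ℤ) :
    ∃ γ : SL(2, ℤ), (γ.1 * M) 0 0 = gcd (M 0 0) (M 1 0) ∧ (γ.1 * M) 1 0 = 0 := by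
  by_cases hg : gcd (M 0 0) (M 1 0) = 0
  · obtain ⟨ha, hc⟩ := gcd_eq_zero_iff.mp hg
    exact ⟨1, by simp [ha, hc]⟩
  obtain ⟨a', ha'⟩ := gcd_dvd_left (M 0 0) (M 1 0)
  obtain ⟨c', hc'⟩ := gcd_dvd_right (M 0 0) (M 1 0)
  have hbez := gcd_eq_gcd_ab (M 0 0) (M 1 0)
  have hdet : gcdA (M 0 0) (M 1 0) * a' + gcdB (M 0 0) (M 1 0) * c' = 1 :=
    mul_left_cancel₀ (natCast_ne_zero.mpr hg) <| by
      linear_combination -hbez - gcdA (M 0 0) (M 1 0) * ha' - gcdB (M 0 0) (M 1 0) * hc'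
  refine ⟨⟨!![gcdA (M 0 0) (M 1 0), gcdB (M 0 0) (M 1 0); -c', a'], by
    simp [Matrix.det_fin_two_of]; linear_combination hdet⟩, ?_, ?_⟩ <;>
    simp [Matrix.mul_apply]
  · linear_combination -hbez
  · linear_combination -c' * ha' + a' * hc'

lemma exists_mul_SL2_eq_gcd (M : Matrix (Fin 2) (Fin 2) ℤ) :
    ∃ γ : SL(2, ℤ), (M * γ.1) 0 0 = gcd (M 0 0) (M 0 1) ∧ (M * γ.1) 0 1 = 0 := by
  obtain ⟨γ, h₀, h₁⟩ := exists_SL2_mul_eq_gcd M.transpose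
  have hT : M * γ.transpose.1 = (γ.1 * M.transpose).transpose := by
    simp [Matrix.transpose_mul]
  exact ⟨γ.transpose, by rw [hT]; exact h₀, by rw [hT]; exact h₁⟩

end Int

namespace Matrix

def IsSL2Diagonalizable (M : Matrix (Fin 2) (Fin 2) ℤ) : Prop :=
  ∃ γ₁ γ₂ : SL(2, ℤ), (γ₁.1 * M * γ₂.1) 0 1 = 0 ∧ (γ₁.1 * M * γ₂.1) 1 0 = 0

namespace IsSL2Diagonalizable

variable {M : Matrix (Fin 2) (Fin 2) ℤ}

lemma of_SL2_mul (γ : SL(2, ℤ)) : IsSL2Diagonalizable (γ.1 * M) → IsSL2Diagonalizable M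
  | ⟨γ₁, γ₂, h⟩ => ⟨γ₁ * γ, γ₂, by simpa [Matrix.mul_assoc] using h⟩

lemma of_mul_SL2 (γ : SL(2, ℤ)) : IsSL2Diagonalizable (M * γ.1) → IsSL2Diagonalizable M
  | ⟨γ₁, γ₂, h⟩ => ⟨γ₁, γ * γ₂, by simpa [Matrix.mul_assoc] using h⟩

lemma of_dvd (h₁ : M 0 0 ∣ M 1 0) (h₂ : M 0 0 ∣ M 0 1) : IsSL2Diagonalizable M := by
  obtain ⟨q₁, hq₁⟩ := h₁
  obtain ⟨q₂, hq₂⟩ := h₂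
  refine ⟨⟨!![1, 0; -q₁, 1], by simp [det_fin_two_of]⟩,
    ⟨!![1, -q₂; 0, 1], by simp [det_fin_two_of]⟩, ?_, ?_⟩ <;>
    simp [mul_apply, vecMul, dotProduct, Fin.sum_univ_two, hq₁, hq₂, mul_comm]

end IsSL2Diagonalizable

lemma isSL2Diagonalizable_of_ne_zero {M : Matrix (Fin 2) (Fin 2) ℤ} (hM : M 0 0 ≠ 0) :
    IsSL2Diagonalizable M := by
  induction hn : (M 0 0).natAbs using Nat.strong_induction_on generalizing M with
  | _ n ih =>
  have descend {N : Matrix (Fin 2) (Fin 2) ℤ} {b : ℤ} (hN : N 0 0 = Int.gcd (M 0 0) b)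
      (hb : ¬ M 0 0 ∣ b) : IsSL2Diagonalizable N := by
    refine ih _ ?_ (hN ▸ Int.natCast_ne_zero.mpr (mt Int.gcd_eq_zero_iff.mp fun h => hM h.1)) rfl
    rw [← hn, hN, Int.natAbs_natCast]
    exact lt_of_le_of_ne (Int.gcd_le_natAbs_left b hM) (mt Int.gcd_eq_natAbs_left_iff_dvd.mp hb)
  by_cases h₁ : M 0 0 ∣ M 1 0
  · by_cases h₂ : M 0 0 ∣ M 0 1
    · exact .of_dvd h₁ h₂
    · obtain ⟨γ, hγ, -⟩ := Int.exists_mul_SL2_eq_gcd M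
      exact .of_mul_SL2 γ (descend hγ h₂)
  · obtain ⟨γ, hγ, -⟩ := Int.exists_SL2_mul_eq_gcd M
    exact .of_SL2_mul γ (descend hγ h₁)

lemma isSL2Diagonalizable (M : Matrix (Fin 2) (Fin 2) ℤ) : IsSL2Diagonalizable M := by
  obtain ⟨γ, hγ, -⟩ := Int.exists_SL2_mul_eq_gcd M
  obtain ⟨γ', hγ', -⟩ := Int.exists_mul_SL2_eq_gcd M
  by_cases hc : Int.gcd (M 0 0) (M 1 0) = 0
  · by_cases hb : Int.gcd (M 0 0) (M 0 1) = 0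
    · exact .of_dvd (by simp [(Int.gcd_eq_zero_iff.mp hc).2])
        (by simp [(Int.gcd_eq_zero_iff.mp hb).2])
    · exact .of_mul_SL2 γ' (isSL2Diagonalizable_of_ne_zero (by rw [hγ']; exact_mod_cast hb))
  · exact .of_SL2_mul γ (isSL2Diagonalizable_of_ne_zero (by rw [hγ]; exact_mod_cast hc))

end Matrix

namespace IsLocalization.Away

variable {m : ℤ} {S : Type*} [CommRing S] [Algebra ℤ S] [IsLocalization.Away m S]

variable (S) in
lemma algebraMap_int_injective (hm : m ≠ 0) : Function.Injective (algebraMap ℤ S) :=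
  IsLocalization.injective S (powers_le_nonZeroDivisors_of_noZeroDivisors hm)

variable (m S) in
noncomputable def unitSelf : Sˣ := (algebraMap_isUnit m).unit

@[simp]
lemma val_unitSelf : (unitSelf m S : S) = algebraMap ℤ S m := IsUnit.unit_spec _

lemma exists_eq_algebraMap_mul_zpow (hm : Prime m) {x : S} (hx : x ≠ 0) :
    ∃ A j : ℤ, ¬ m ∣ A ∧ x = algebraMap ℤ S A * ↑(unitSelf m S ^ j) := by
  obtain ⟨k, z, hz⟩ := surj m x
  have hz0 : z ≠ 0 := by
    rintro rfl
    exact hx ((algebraMap_pow_isUnit m k).mul_left_eq_zero.mp (by simpa using hz))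
  obtain ⟨A, hzA, hA⟩ :=
    (FiniteMultiplicity.of_prime_left hm hz0).exists_eq_pow_mul_and_not_dvd
  generalize multiplicity m z = s at hzA
  refine ⟨A, s - k, hA, ?_⟩
  rw [zpow_sub, zpow_natCast, zpow_natCast, Units.val_mul, ← mul_assoc,
    Units.eq_mul_inv_iff_mul_eq, Units.val_pow_eq_pow_val, Units.val_pow_eq_pow_val, val_unitSelf,
    hz, hzA, map_mul, map_pow, mul_comm]

lemma exists_eq_zpow_or_eq_neg_zpow (hm : Prime m) (δ : Sˣ) :
    ∃ j : ℤ, δ = unitSelf m S ^ j ∨ δ = -unitSelf m S ^ j := by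
  have : Nontrivial S := (algebraMap_int_injective S hm.ne_zero).nontrivial
  obtain ⟨A, j, hA, hδ⟩ := exists_eq_algebraMap_mul_zpow hm δ.ne_zero
  have hAunit : IsUnit (algebraMap ℤ S A) := by
    rw [(Units.eq_mul_inv_iff_mul_eq _).mpr hδ.symm]
    exact δ.isUnit.mul (unitSelf m S ^ j)⁻¹.isUnit
  obtain ⟨n, hAn⟩ := (algebraMap_isUnit_iff m).mp hAunit
  refine ⟨j, ?_⟩
  rcases Int.isUnit_iff.mp ((hm.coprime_iff_not_dvd.mpr hA).pow_left.isUnit_of_dvd' hAn dvd_rfl)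
    with rfl | rfl
  · exact .inl (Units.ext (by simpa using hδ))
  · exact .inr (Units.ext (by simpa using hδ))

lemma exists_eq_algebraMap_of_mul_eq (hm : Prime m) {W G V : ℤ} (hW : W ≠ 0) (hV : ¬ m ∣ V)
    (hdvd : W ∣ G * V) {x : S} (hx : algebraMap ℤ S W * x = algebraMap ℤ S G) :
    ∃ C : ℤ, x = algebraMap ℤ S C := by
  obtain ⟨s, C, hC⟩ := surj m x
  obtain ⟨Z, hZ⟩ := hdvd
  have hWC : W * C = G * m ^ s := algebraMap_int_injective S hm.ne_zero <| by
    rw [map_mul, ← hC, map_mul, ← hx, map_pow]; ring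
  have hCV : C * V = m ^ s * Z := mul_left_cancel₀ hW (by linear_combination V * hWC + m ^ s * hZ)
  obtain ⟨C', rfl⟩ := (hm.coprime_iff_not_dvd.mpr hV).pow_left.dvd_of_dvd_mul_right ⟨Z, hCV⟩
  refine ⟨C', (algebraMap_pow_isUnit m s).mul_left_inj.mp ?_⟩
  rw [hC, map_mul, map_pow, mul_comm]

end IsLocalization.Away

namespace Matrix.SpecialLinearGroup

variable {R : Type*} [CommRing R]

lemma exists_map_mul_mul_map_eq_diagUnit {M : Submonoid ℤ} [Algebra ℤ R] [IsLocalization M R]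
    (g : SL(2, R)) :
    ∃ (γ₁ γ₂ : SL(2, ℤ)) (δ : Rˣ), map (algebraMap ℤ R) γ₁ * g * map (algebraMap ℤ R) γ₂ =
      diagUnit δ := by
  obtain ⟨b, hb⟩ :=
    IsLocalization.exist_integer_multiples_of_finite M fun p : Fin 2 × Fin 2 => g p.1 p.2
  choose N hN using fun i j => RingHom.mem_rangeS.mp (hb (i, j))
  obtain ⟨γ₁, γ₂, h01, h10⟩ := Matrix.isSL2Diagonalizable (Matrix.of N)
  set g' := map (algebraMap ℤ R) γ₁ * g * map (algebraMap ℤ R) γ₂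
  suffices ∃ δ : Rˣ, g' = diagUnit δ from ⟨γ₁, γ₂, this⟩
  have hg' (i j : Fin 2) :
      algebraMap ℤ R ((γ₁.1 * Matrix.of N * γ₂.1) i j) = algebraMap ℤ R b * g' i j := by
    simp only [g', coe_mul, Matrix.mul_apply, Fin.sum_univ_two, map_add, map_mul, hN,
      Algebra.smul_def, map_apply_coe, RingHom.mapMatrix_apply, Matrix.map_apply, Matrix.of_apply]
    ring
  have hb := IsLocalization.map_units R b
  have h01' : g' 0 1 = 0 := hb.mul_right_eq_zero.mp (by rw [← hg', h01, map_zero])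
  have h10' : g' 1 0 = 0 := hb.mul_right_eq_zero.mp (by rw [← hg', h10, map_zero])
  have hdet : g' 0 0 * g' 1 1 = 1 := by
    have := g'.2
    rwa [Matrix.det_fin_two, h01', h10', mul_zero, sub_zero] at this
  refine ⟨⟨g' 0 0, g' 1 1, hdet, by rw [mul_comm, hdet]⟩, ?_⟩
  clear_value g'
  ext i j
  fin_cases i <;> fin_cases j <;> simp [h01', h10']

end Matrix.SpecialLinearGroup

namespace BQF

open IsLocalization.Away

variable {m : ℤ} {S : Type*} [CommRing S] [Algebra ℤ S] [IsLocalization.Away m S]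

lemma equiv_of_act_diagUnit_map (hm : Prime m) {Q₁ Q₂ : BQF ℤ} (hQ₂ : Q₂.disc = 1 - 4 * m)
    {δ : Sˣ} {n : ℕ} (hδ : (δ : S) ^ 2 = algebraMap ℤ S m ^ (2 * n))
    (h : act (diagUnit δ) (Q₁.map (algebraMap ℤ S)) = Q₂.map (algebraMap ℤ S)) :
    Equiv Q₂ Q₁ := by
  have hinj := algebraMap_int_injective S hm.ne_zero
  simp only [act_diagUnit, map, mk.injEq] at h
  obtain ⟨ha, hb, hc⟩ := h
  have e₂ : Q₂ = ⟨m ^ (2 * n) * Q₁.a, Q₁.b, Q₂.c⟩ :=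
    ext (hinj (by rw [← ha, hδ]; simp [mul_comm])) (hinj hb).symm rfl
  have e₁ : Q₁ = ⟨Q₁.a, Q₁.b, m ^ (2 * n) * Q₂.c⟩ :=
    ext rfl rfl <| hinj <| by
      rw [map_mul, map_pow, ← hδ, ← hc, mul_left_comm, ← mul_pow, Units.mul_inv, one_pow, mul_one]
  rw [e₂] at hQ₂
  rw [e₂, e₁]
  exact equiv_mul_pow_of_disc_eq hm n hQ₂

lemma exists_sq_eq_or_inv_sq_eq (hm : Prime m) (δ : Sˣ) :
    ∃ n : ℕ, (δ : S) ^ 2 = algebraMap ℤ S m ^ (2 * n) ∨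
      ((δ⁻¹ : Sˣ) : S) ^ 2 = algebraMap ℤ S m ^ (2 * n) := by
  obtain ⟨j, hj⟩ := exists_eq_zpow_or_eq_neg_zpow hm δ
  have hsq : δ ^ 2 = unitSelf m S ^ (2 * j) := by
    rw [mul_comm, zpow_mul]
    rcases hj with rfl | rfl <;> simp
  obtain ⟨n, rfl | rfl⟩ := Int.eq_nat_or_neg j
  · refine ⟨n, .inl ?_⟩
    have : δ ^ 2 = unitSelf m S ^ (2 * n) := by rw [hsq]; norm_cast
    simpa using congrArg Units.val this
  · refine ⟨n, .inr ?_⟩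
    have : δ⁻¹ ^ 2 = unitSelf m S ^ (2 * n) := by
      rw [inv_pow, hsq, ← zpow_neg, mul_neg, neg_neg]; norm_cast
    simpa using congrArg Units.val this

lemma equiv_of_equiv_map (hm : Prime m) {Q₁ Q₂ : BQF ℤ} (hQ₁ : Q₁.disc = 1 - 4 * m)
    (hQ₂ : Q₂.disc = 1 - 4 * m) (h : Equiv (Q₁.map (algebraMap ℤ S)) (Q₂.map (algebraMap ℤ S))) :
    Equiv Q₁ Q₂ := by
  obtain ⟨g, hg⟩ := h
  obtain ⟨γ₁, γ₂, δ, hδ⟩ :=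
    Matrix.SpecialLinearGroup.exists_map_mul_mul_map_eq_diagUnit (M := .powers m) g
  have hdiag : act (diagUnit δ) ((act γ₁⁻¹ Q₁).map (algebraMap ℤ S)) =
      (act γ₂ Q₂).map (algebraMap ℤ S) := by
    rw [← hδ, mul_assoc, act_mul, ← map_act, ← act_mul, inv_mul_cancel, act_one, act_mul, hg,
      ← map_act]
  have hQ₁' : Equiv Q₁ (act γ₁⁻¹ Q₁) := ⟨γ₁⁻¹, rfl⟩
  have hQ₂' : Equiv (act γ₂ Q₂) Q₂ := ⟨γ₂⁻¹, act_inv_act γ₂ Q₂⟩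
  obtain ⟨n, hn | hn⟩ := exists_sq_eq_or_inv_sq_eq hm δ
  · exact hQ₁'.trans <| (equiv_of_act_diagUnit_map hm (by rwa [disc_act]) hn hdiag).symm.trans hQ₂'
  · have hdiag' : act (diagUnit δ⁻¹) ((act γ₂ Q₂).map (algebraMap ℤ S)) =
        (act γ₁⁻¹ Q₁).map (algebraMap ℤ S) := by
      rw [← hdiag, map_inv, act_inv_act]
    exact hQ₁'.trans <| (equiv_of_act_diagUnit_map hm (by rwa [disc_act]) hn hdiag').trans hQ₂'

lemma exists_equiv_a_eq_algebraMap (hm : Prime m) (Q : BQF S) (ha : Q.a ≠ 0) :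
    ∃ (Q' : BQF S) (A : ℤ) (e : ℕ), Equiv Q Q' ∧ Q'.a = algebraMap ℤ S (A * m ^ e) ∧
      ¬ m ∣ A ∧ e ≤ 1 := by
  obtain ⟨A, j, hA, hQa⟩ := exists_eq_algebraMap_mul_zpow hm ha
  obtain ⟨e, i, he, hj⟩ : ∃ (e : ℕ) (i : ℤ), e ≤ 1 ∧ j = e + 2 * i :=
    ⟨(j % 2).toNat, j / 2, by omega, by omega⟩
  refine ⟨act (diagUnit (unitSelf m S ^ (-i))) Q, A, e, ⟨_, rfl⟩, ?_, hA, he⟩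
  have hu : unitSelf m S ^ j * (unitSelf m S ^ (-i)) ^ 2 = unitSelf m S ^ e := by
    rw [← zpow_natCast, ← zpow_mul, ← zpow_add, ← zpow_natCast, hj]; ring_nf
  rw [act_diagUnit, hQa, mul_assoc, ← Units.val_pow_eq_pow_val, ← Units.val_mul, hu,
    Units.val_pow_eq_pow_val, val_unitSelf, map_mul, map_pow]

lemma exists_equiv_b_eq_algebraMap (hm : Prime m) (Q : BQF S) {A : ℤ} (hA : A ≠ 0)
    (ha : Q.a = algebraMap ℤ S A) :
    ∃ (Q' : BQF S) (β : ℤ), Equiv Q Q' ∧ Q'.a = Q.a ∧ Q'.b = algebraMap ℤ S β ∧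
      m ^ 2 ∣ β - 1 := by
  have h2a : 2 * Q.a ≠ 0 := by
    rw [ha, ← map_ofNat (algebraMap ℤ S), ← map_mul, Ne,
      ← map_zero (algebraMap ℤ S), (algebraMap_int_injective S hm.ne_zero).eq_iff]
    exact mul_ne_zero two_ne_zero hA
  obtain ⟨q, w, hq, hQa⟩ := exists_eq_algebraMap_mul_zpow hm h2a
  obtain ⟨t, B, hB⟩ := surj m Q.b
  obtain ⟨β, ⟨y, hy⟩, hβ⟩ := hm.exists_dvd_mul_pow_sub_and_sq_dvd_sub_one hq t B
  set n := algebraMap ℤ S y * ↑(unitSelf m S ^ (-w - t))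
  refine ⟨act (shear n) Q, β, ⟨_, rfl⟩, by rw [act_shear], ?_, hβ⟩
  rw [act_shear]
  refine (algebraMap_pow_isUnit m t).mul_left_inj.mp ?_
  have hu : (↑(unitSelf m S ^ w) : S) * ↑(unitSelf m S ^ (-w - t)) * algebraMap ℤ S m ^ t = 1 := by
    rw [← val_unitSelf, ← Units.val_pow_eq_pow_val, ← Units.val_mul, ← Units.val_mul,
      ← zpow_natCast, ← zpow_add, ← zpow_add, show w + (-w - t) + t = 0 by ring, zpow_zero,
      Units.val_one]
  have hy' := congrArg (algebraMap ℤ S) hy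
  simp only [map_sub, map_mul, map_pow] at hy'
  linear_combination (algebraMap ℤ S y * ↑(unitSelf m S ^ (-w - t)) * algebraMap ℤ S m ^ t) * hQa
    + algebraMap ℤ S q * algebraMap ℤ S y * hu + hB - hy'

lemma exists_c_eq_algebraMap (hm : Prime m) {Q : BQF S}
    (hQ : Q.disc = algebraMap ℤ S (1 - 4 * m)) {A β : ℤ} {e : ℕ}
    (ha : Q.a = algebraMap ℤ S (A * m ^ e)) (hA : ¬ m ∣ A) (he : e ≤ 1)
    (hb : Q.b = algebraMap ℤ S β) (hβ : m ^ 2 ∣ β - 1) :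
    ∃ C : ℤ, Q.c = algebraMap ℤ S C := by
  obtain ⟨V, hV, hdvd⟩ := hm.exists_not_dvd_and_four_mul_dvd hβ
  have hA0 : A ≠ 0 := by rintro rfl; exact hA (dvd_zero m)
  refine exists_eq_algebraMap_of_mul_eq hm (W := 4 * (A * m ^ e)) (G := β ^ 2 - (1 - 4 * m))
    (V := V * A)
    (mul_ne_zero four_ne_zero (mul_ne_zero hA0 (pow_ne_zero e hm.ne_zero)))
    (fun h => (hm.dvd_or_dvd h).elim hV hA) ?_ ?_
  · calc 4 * (A * m ^ e) ∣ 4 * m * A := by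
          rw [mul_comm A, ← mul_assoc]
          exact mul_dvd_mul_right (mul_dvd_mul_left 4 ((pow_dvd_pow m he).trans (pow_one m).dvd)) A
      _ ∣ (β ^ 2 - (1 - 4 * m)) * (V * A) := by
          rw [← mul_assoc]; exact mul_dvd_mul_right hdvd A
  · unfold disc at hQ
    rw [ha, hb] at hQ
    simp only [map_mul, map_sub, map_pow, map_ofNat] at hQ ⊢
    linear_combination -hQ

theorem exists_equiv_map (hm : Prime m) {Q : BQF S} (hQ : Q.disc = algebraMap ℤ S (1 - 4 * m)) :
    ∃ Q₀ : BQF ℤ, Q₀.disc = 1 - 4 * m ∧ Equiv (Q₀.map (algebraMap ℤ S)) Q := by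
  have hinj := algebraMap_int_injective S hm.ne_zero
  have hD : Q.disc ≠ 0 := by
    rw [hQ, Ne, ← map_zero (algebraMap ℤ S), hinj.eq_iff]
    omega
  obtain ⟨Q₁, hQQ₁, ha₁⟩ := exists_equiv_a_ne_zero Q hD
  obtain ⟨Q₂, A, e, hQ₁₂, ha₂, hA, he⟩ := exists_equiv_a_eq_algebraMap hm Q₁ ha₁
  obtain ⟨Q₃, β, hQ₂₃, ha₃, hb₃, hβ⟩ := exists_equiv_b_eq_algebraMap hm Q₂
    (mul_ne_zero (by rintro rfl; exact hA (dvd_zero m)) (pow_ne_zero e hm.ne_zero)) ha₂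
  have hQQ₃ := hQQ₁.trans (hQ₁₂.trans hQ₂₃)
  have hQ₃ : Q₃.disc = algebraMap ℤ S (1 - 4 * m) := hQQ₃.disc_eq.trans hQ
  obtain ⟨C, hc₃⟩ := exists_c_eq_algebraMap hm hQ₃ (ha₃.trans ha₂) hA he hb₃ hβ
  have hmap : Q₃ = (⟨A * m ^ e, β, C⟩ : BQF ℤ).map (algebraMap ℤ S) :=
    ext (ha₃.trans ha₂) hb₃ hc₃
  exact ⟨⟨A * m ^ e, β, C⟩, hinj (by rw [← disc_map, ← hmap, hQ₃]), hmap ▸ hQQ₃.symm⟩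

end BQF

theorem Quot.exists_equiv_of_rel_iff {α β : Type*} {r : α → α → Prop} {s : β → β → Prop}
    (hs : Equivalence s) (f : α → β) (hf : ∀ x y, s (f x) (f y) ↔ r x y)
    (hsurj : ∀ y, ∃ x, s (f x) y) :
    ∃ F : Quot r ≃ Quot s, ∀ x, F (Quot.mk r x) = Quot.mk s (f x) := by
  let F₀ : Quot r → Quot s := Quot.lift (fun x => Quot.mk s (f x)) fun x y h =>
    Quot.sound ((hf x y).mpr h)
  refine ⟨Equiv.ofBijective F₀ ⟨fun u v huv => ?_, fun v => ?_⟩, fun _ => rfl⟩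
  · induction u using Quot.ind
    induction v using Quot.ind
    exact Quot.sound ((hf _ _).mp ((hs.eqvGen_iff).mp (Quot.eqvGen_exact huv)))
  · induction v using Quot.ind with
    | _ y =>
      obtain ⟨x, hx⟩ := hsurj y
      exact ⟨Quot.mk r x, Quot.sound hx⟩

/-- For `m` a nonzero integer with `|m|` prime, base change along `ℤ → ℤ[1/m]` induces a
bijection from the set of `SL₂(ℤ)`-equivalence classes of integer binary quadratic forms
of discriminant `1 - 4m` onto the set of `SL₂(ℤ[1/m])`-equivalence classes of binary
quadratic forms over `ℤ[1/m]` of discriminant `1 - 4m`. -/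
theorem base_change_bijection (m : ℤ) (hm : m.natAbs.Prime) :
    ∃ F : Quot (fun Q₁ Q₂ : {Q : BQF ℤ // Q.disc = 1 - 4 * m} =>
            BQF.Equiv Q₁.1 Q₂.1) ≃
          Quot (fun Q₁ Q₂ : {Q : BQF (Localization.Away m) //
              Q.disc = algebraMap ℤ (Localization.Away m) (1 - 4 * m)} =>
            BQF.Equiv Q₁.1 Q₂.1),
      ∀ Q : {Q : BQF ℤ // Q.disc = 1 - 4 * m},
        F (Quot.mk _ Q) =
          Quot.mk _ ⟨Q.1.map (algebraMap ℤ (Localization.Away m)),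
            by rw [BQF.disc_map, Q.2]⟩ := by
  have hp : Prime m := Int.prime_iff_natAbs_prime.mpr hm
  refine Quot.exists_equiv_of_rel_iff (BQF.equivalence_equiv.comap Subtype.val) _
    (fun Q₁ Q₂ => ⟨BQF.equiv_of_equiv_map hp Q₁.2 Q₂.2, BQF.Equiv.map _⟩) fun Q => ?_
  obtain ⟨Q₀, hQ₀, hE⟩ := BQF.exists_equiv_map hp Q.2
  exact ⟨⟨Q₀, hQ₀⟩, hE⟩
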